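/- Let β > 1 and let β_N < β be the unique real solution in (1,∞) of 1 = Σ_{j=1}^N ε*_j(β)/β_N^j, where N is such that ε*_N(β) ≥ 1. Then for any words (ε_1,…,ε_n) ∈ Σ_{β_N}^n and (ε'_1,…,ε'_m) ∈ Σ_{β_N}^m, the concatenation (ε_1,…,ε_n, 0^N, ε'_1,…,ε'_m) is β_N-admissible, where 0^N denotes N zeros. -/

import Mathlib

open MeasureTheory Filter Real Set

noncomputable section

/-- The β-transformation `x ↦ βx mod 1`. -/
def bT (β x : ℝ) : ℝ := Int.fract (β * x)

/-- The digit `ε_{j+1}(x, β) = ⌊β T_β^j x⌋` (0-indexed). -/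
def dig (β x : ℝ) (j : ℕ) : ℤ := ⌊β * (bT β)^[j] x⌋

/-- A finite word is admissible if it is the initial digit string of some `x ∈ [0,1)`. -/
def Adm (β : ℝ) (w : List ℤ) : Prop :=
  ∃ x ∈ Set.Ico (0:ℝ) 1, ∀ i : Fin w.length, dig β x i = w.get i

/-- The set `Σ_β^n` of admissible words of length `n`. -/
def SigmaB (β : ℝ) (n : ℕ) : Set (List ℤ) := {w | w.length = n ∧ Adm β w}

/-- The cylinder of a word. -/
def cyl (β : ℝ) (w : List ℤ) : Set ℝ :=
  {x | x ∈ Set.Ico (0:ℝ) 1 ∧ ∀ i : Fin w.length, dig β x i = w.get i}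

/-- The length of a cylinder. -/
def cylLen (β : ℝ) (w : List ℤ) : ℝ := (volume (cyl β w)).toReal

/-- A word/cylinder is full if the cylinder has maximal length `β^{-n}`. -/
def IsFull (β : ℝ) (w : List ℤ) : Prop := cylLen β w = (β ^ w.length)⁻¹

/-- The left endpoint `Σ_j ε_j β^{-j}` of the cylinder of a word. -/
def leftpt (β : ℝ) (w : List ℤ) : ℝ :=
  ∑ i : Fin w.length, (w.get i : ℝ) / β ^ ((i : ℕ) + 1)

/-- Birkhoff (ergodic) sum `S_n f(x)`. -/
def birk (β : ℝ) (f : ℝ → ℝ) (n : ℕ) (x : ℝ) : ℝ :=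
  ∑ j ∈ Finset.range n, f ((bT β)^[j] x)

/-- The digit sequence of `1`. -/
def eps1 (β : ℝ) (j : ℕ) : ℤ := ⌊β * (bT β)^[j] 1⌋

/-- The infinite β-expansion of `1`. -/
def epsStar (β : ℝ) : ℕ → ℤ := by
  classical
  exact
  if h : ∃ m, eps1 β m ≠ 0 ∧ ∀ k, m < k → eps1 β k = 0 then
    fun j =>
      if j % (h.choose + 1) = h.choose then eps1 β h.choose - 1
      else eps1 β (j % (h.choose + 1))
  else eps1 β

/-- Strict lexicographic order on integer sequences. -/
def lexLt (a b : ℕ → ℤ) : Prop := ∃ k, (∀ j, j < k → a j = b j) ∧ a k < b k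

/-- The partition function `Σ_{w ∈ Σ_β^n} sup_{y ∈ I_n(w)} e^{S_n g(y)}`. -/
def presSum (β : ℝ) (g : ℝ → ℝ) (n : ℕ) : ℝ :=
  ∑' w : SigmaB β n, ⨆ y ∈ cyl β (w : List ℤ), Real.exp (birk β g n y)

/-- The pressure function `P(g, T_β)`. -/
def pressure (β : ℝ) (g : ℝ → ℝ) : ℝ :=
  limUnder Filter.atTop fun n : ℕ => Real.log (presSum β g n) / n

end

/-!
Write `d = ε*(β)` and `γ = β_N`, so that `1 = ∑_{i<N} d_i γ^{-(i+1)}`. Parry's condition on `d`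
(no shift of `d` is lexicographically larger than `d`) bounds every tail
`∑_{k≤i<N} d_i γ^{-(i-k+1)}` of this sum by `1`. Comparing the digits of a point `y ∈ [0, 1)`
with the periodic word `(d₀ ⋯ d_{N-2} (d_{N-1} - 1))^∞` then shows that the first `m` digits of
`y` are worth at most `1 - γ^{-(m+N)}`. This gap is exactly the room needed to write `N` zeros
and then the digits of a point `b` realizing `v` after a point `a` realizing `u`: the point
`∑_{i<n} u_i γ^{-(i+1)} + b γ^{-(n+N)}` has digits `u 0^N v`.
-/

section BetaTransformation

variable {β : ℝ}

lemma bT_mem_Ico (β x : ℝ) : bT β x ∈ Ico (0 : ℝ) 1 :=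
  ⟨Int.fract_nonneg _, Int.fract_lt_one _⟩

lemma iterate_bT_mem_Ico {x : ℝ} (hx : x ∈ Ico (0 : ℝ) 1) :
    ∀ j, (bT β)^[j] x ∈ Ico (0 : ℝ) 1
  | 0 => hx
  | j + 1 => by rw [Function.iterate_succ_apply']; exact bT_mem_Ico β _

lemma iterate_bT_nonneg {x : ℝ} (hx : 0 ≤ x) : ∀ j, 0 ≤ (bT β)^[j] x
  | 0 => hx
  | j + 1 => by rw [Function.iterate_succ_apply']; exact Int.fract_nonneg _

lemma mul_iterate_bT (β x : ℝ) (j : ℕ) :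
    β * (bT β)^[j] x = dig β x j + (bT β)^[j + 1] x := by
  rw [Function.iterate_succ_apply', bT, dig, Int.floor_add_fract]

lemma dig_add (β x : ℝ) (k j : ℕ) : dig β x (k + j) = dig β ((bT β)^[k] x) j := by
  rw [dig, dig, add_comm, Function.iterate_add_apply]

lemma dig_nonneg (hβ : 0 ≤ β) {x : ℝ} (hx : 0 ≤ x) (j : ℕ) : 0 ≤ dig β x j :=
  Int.floor_nonneg.mpr (mul_nonneg hβ (iterate_bT_nonneg hx j))

lemma iterate_bT_le_pow_mul (hβ : 0 ≤ β) {x : ℝ} (hx : 0 ≤ x) (m : ℕ) :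
    (bT β)^[m] x ≤ β ^ m * x := by
  induction m with
  | zero => simp
  | succ m ih =>
    have hstep := mul_iterate_bT β x m
    have hdig : (0 : ℝ) ≤ dig β x m := by exact_mod_cast dig_nonneg hβ hx m
    have := mul_le_mul_of_nonneg_left ih hβ
    rw [pow_succ]
    linarith

lemma dig_eq_and_iterate_eq_of_orbit {t : ℕ → ℝ} {e : ℕ → ℤ} {n : ℕ}
    (ht : ∀ j ≤ n, t j ∈ Ico (0 : ℝ) 1) (hstep : ∀ j < n, β * t j = e j + t (j + 1)) :
    (∀ j < n, dig β (t 0) j = e j) ∧ (bT β)^[n] (t 0) = t n := by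
  have horbit : ∀ j ≤ n, (bT β)^[j] (t 0) = t j := by
    intro j
    induction j with
    | zero => intro _; rfl
    | succ j ih =>
      intro hj
      rw [Function.iterate_succ_apply', ih (by omega), bT, hstep j hj, Int.fract_intCast_add,
        Int.fract_eq_self.mpr (ht _ hj)]
  refine ⟨fun j hj => ?_, horbit n le_rfl⟩
  rw [dig, horbit j hj.le, hstep j hj, Int.floor_intCast_add,
    Int.floor_eq_zero_iff.mpr (ht _ hj), add_zero]

lemma dig_div_pow_eq_zero_and_iterate (hβ : 1 ≤ β) {b : ℝ} (hb : b ∈ Ico (0 : ℝ) 1) (N : ℕ) :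
    (∀ k < N, dig β (b / β ^ N) k = 0) ∧ (bT β)^[N] (b / β ^ N) = b := by
  have hβ0 : β ≠ 0 := by positivity
  have := dig_eq_and_iterate_eq_of_orbit (β := β) (t := fun j => b / β ^ (N - j)) (e := 0)
    (n := N) (fun j _ => ⟨by have := hb.1; positivity,
      (div_lt_one (by positivity)).mpr (hb.2.trans_le (one_le_pow₀ hβ))⟩)
    (fun j hj => by
      rw [show N - j = N - (j + 1) + 1 by omega, pow_succ]
      field_simp
      simp)
  simpa using this

/-- Replacing the tail `T^n a` of `a` by `z`: the point `a + (z - T^n a) / β^n` keeps the first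
`n` digits of `a` as long as its intermediate iterates (the left side of `hroom`) stay below `1`. -/
lemma exists_dig_eq_of_iterate_eq (hβ : 0 < β) {a z : ℝ} {n : ℕ} (ha : a ∈ Ico (0 : ℝ) 1)
    (hz : 0 ≤ z) (hroom : ∀ j ≤ n, (bT β)^[j] a + (z - (bT β)^[n] a) / β ^ (n - j) < 1) :
    ∃ x ∈ Ico (0 : ℝ) 1, (∀ j < n, dig β x j = dig β a j) ∧ (bT β)^[n] x = z := by
  set t : ℕ → ℝ := fun j => (bT β)^[j] a + (z - (bT β)^[n] a) / β ^ (n - j) with ht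
  have hmem : ∀ j ≤ n, t j ∈ Ico (0 : ℝ) 1 := by
    intro j hj
    refine ⟨?_, hroom j hj⟩
    have hle := iterate_bT_le_pow_mul hβ.le (iterate_bT_nonneg (β := β) ha.1 j) (n - j)
    rw [← Function.iterate_add_apply, Nat.sub_add_cancel hj] at hle
    have : (bT β)^[n] a / β ^ (n - j) ≤ (bT β)^[j] a := by
      rw [div_le_iff₀ (by positivity)]; linarith
    have : 0 ≤ z / β ^ (n - j) := by positivity
    simp only [ht, sub_div]
    linarith
  have hstep : ∀ j < n, β * t j = dig β a j + t (j + 1) := by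
    intro j hj
    have := mul_iterate_bT β a j
    simp only [ht]
    rw [show n - j = n - (j + 1) + 1 by omega, pow_succ]
    field_simp
    linear_combination β ^ (n - (j + 1)) * this
  obtain ⟨hdig, hiter⟩ := dig_eq_and_iterate_eq_of_orbit hmem hstep
  exact ⟨t 0, hmem 0 (Nat.zero_le n), hdig, by simpa [ht] using hiter⟩

end BetaTransformation

/-- `Adm β w` unfolds to `∃ x ∈ Ico 0 1, HasDigitPrefix β x w`. -/
def HasDigitPrefix (β x : ℝ) (w : List ℤ) : Prop :=
  ∀ i : Fin w.length, dig β x i = w.get i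

section DigitPrefix

variable {β x : ℝ}

lemma HasDigitPrefix.append {u v : List ℤ} (hu : HasDigitPrefix β x u)
    (hv : HasDigitPrefix β ((bT β)^[u.length] x) v) : HasDigitPrefix β x (u ++ v) := by
  rintro ⟨i, hi⟩
  rw [List.length_append] at hi
  simp only [List.get_eq_getElem]
  rcases lt_or_ge i u.length with h | h
  · rw [List.getElem_append_left h]
    exact hu ⟨i, h⟩
  · rw [List.getElem_append_right h]
    have := hv ⟨i - u.length, by omega⟩
    rwa [← dig_add, Nat.add_sub_cancel' h] at this

lemma hasDigitPrefix_replicate_zero {N : ℕ} (h : ∀ k < N, dig β x k = 0) :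
    HasDigitPrefix β x (List.replicate N 0) := by
  rintro ⟨k, hk⟩
  rw [List.length_replicate] at hk
  simpa using h k hk

end DigitPrefix

/-- `y - T^m y / γ^m` is the value `∑_{i<m} ε_i(y) γ^{-(i+1)}` of the first `m` digits of `y`;
a gap of `γ^{-(m+N)}` below `1` leaves room for `N` zeros followed by any admissible word. -/
lemma adm_append_replicate_zero_append {γ : ℝ} {N : ℕ} (hγ : 1 ≤ γ)
    (hroom : ∀ y ∈ Ico (0 : ℝ) 1, ∀ m, y - (bT γ)^[m] y / γ ^ m + (γ ^ (m + N))⁻¹ ≤ 1)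
    {u v : List ℤ} (hu : Adm γ u) (hv : Adm γ v) : Adm γ (u ++ List.replicate N 0 ++ v) := by
  obtain ⟨a, ha, hua⟩ := hu
  obtain ⟨b, hb, hvb⟩ := hv
  set n := u.length
  obtain ⟨hzero, hTz⟩ := dig_div_pow_eq_zero_and_iterate hγ hb N
  have hfits : ∀ j ≤ n, (bT γ)^[j] a + (b / γ ^ N - (bT γ)^[n] a) / γ ^ (n - j) < 1 := by
    intro j hj
    have hgap := hroom _ (iterate_bT_mem_Ico (β := γ) ha j) (n - j)
    rw [← Function.iterate_add_apply, Nat.sub_add_cancel hj] at hgap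
    have hb' : b / γ ^ N / γ ^ (n - j) < (γ ^ (n - j + N))⁻¹ := by
      rw [div_div, ← pow_add, add_comm N, inv_eq_one_div]
      exact div_lt_div_of_pos_right hb.2 (by positivity)
    rw [sub_div]
    linarith
  obtain ⟨x, hx, hxa, hTx⟩ :=
    exists_dig_eq_of_iterate_eq (by positivity) ha (div_nonneg hb.1 (by positivity)) hfits
  have hxu : HasDigitPrefix γ x u := fun i => (hxa i i.2).trans (hua i)
  refine ⟨x, hx, (hxu.append ?_).append ?_⟩
  · rw [hTx]
    exact hasDigitPrefix_replicate_zero hzero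
  · rwa [List.length_append, List.length_replicate, add_comm, Function.iterate_add_apply, hTx,
      hTz]

/-- Parry's lexicographic condition. -/
def LexShiftMaximal (a : ℕ → ℤ) : Prop :=
  ∀ k, (fun j => a (k + j)) = a ∨ lexLt (fun j => a (k + j)) a

/-- The periodic sequence `(a₀, …, a_{c-1}, a_c - 1)^∞`. -/
def periodize (a : ℕ → ℤ) (c j : ℕ) : ℤ :=
  if j % (c + 1) = c then a c - 1 else a (j % (c + 1))

section Lex

variable {β : ℝ}

lemma iterate_bT_le_of_dig_eq (hβ : 0 ≤ β) {x y : ℝ} (hxy : x ≤ y) {n : ℕ}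
    (h : ∀ j < n, dig β x j = dig β y j) : (bT β)^[n] x ≤ (bT β)^[n] y := by
  induction n with
  | zero => exact hxy
  | succ n ih =>
    have hx := mul_iterate_bT β x n
    have hy := mul_iterate_bT β y n
    have := mul_le_mul_of_nonneg_left (ih fun j hj => h j (by omega)) hβ
    rw [h n n.lt_succ_self] at hx
    linarith

lemma dig_eq_or_lexLt_of_le (hβ : 0 ≤ β) {x y : ℝ} (hxy : x ≤ y) :
    dig β x = dig β y ∨ lexLt (dig β x) (dig β y) := by
  classical
  by_cases heq : dig β x = dig β y
  · exact Or.inl heq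
  have hne : ∃ n, dig β x n ≠ dig β y n := Function.ne_iff.mp heq
  have hpre : ∀ j < Nat.find hne, dig β x j = dig β y j :=
    fun j hj => not_not.mp (Nat.find_min hne hj)
  refine Or.inr ⟨Nat.find hne, hpre, lt_of_le_of_ne ?_ (Nat.find_spec hne)⟩
  exact Int.floor_le_floor (mul_le_mul_of_nonneg_left (iterate_bT_le_of_dig_eq hβ hxy hpre) hβ)

lemma lexShiftMaximal_eps1 (hβ : 0 ≤ β) : LexShiftMaximal (eps1 β) := by
  intro k
  have hle : (bT β)^[k] 1 ≤ 1 := by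
    cases k with
    | zero => rfl
    | succ k => rw [Function.iterate_succ_apply']; exact (bT_mem_Ico β _).2.le
  rw [show (fun j => eps1 β (k + j)) = dig β ((bT β)^[k] 1) from funext (dig_add β 1 k)]
  exact dig_eq_or_lexLt_of_le hβ hle

lemma epsStar_eq_periodize_or_eq (β : ℝ) :
    (∃ c, eps1 β c ≠ 0 ∧ (∀ k, c < k → eps1 β k = 0) ∧ epsStar β = periodize (eps1 β) c) ∨
      epsStar β = eps1 β := by
  unfold epsStar
  split_ifs with h
  · exact Or.inl ⟨_, h.choose_spec.1, h.choose_spec.2, rfl⟩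
  · exact Or.inr rfl

section Periodize

variable {a : ℕ → ℤ} {c : ℕ}

lemma periodize_of_lt {j : ℕ} (hj : j < c) : periodize a c j = a j := by
  rw [periodize, Nat.mod_eq_of_lt (by omega), if_neg hj.ne]

lemma periodize_self : periodize a c c = a c - 1 := by
  rw [periodize, Nat.mod_eq_of_lt c.lt_succ_self, if_pos rfl]

lemma periodize_add (k j : ℕ) : periodize a c (k + j) = periodize a c (k % (c + 1) + j) := by
  simp only [periodize, Nat.add_mod k, Nat.add_mod (k % (c + 1)), Nat.mod_mod]

lemma periodize_nonneg (ha : ∀ j, 0 ≤ a j) (hc : a c ≠ 0) (j : ℕ) : 0 ≤ periodize a c j := by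
  have := ha c
  unfold periodize
  split_ifs
  · omega
  · exact ha _

lemma lexShiftMaximal_periodize (ha : LexShiftMaximal a) (hc : a c ≠ 0)
    (htail : ∀ k, c < k → a k = 0) : LexShiftMaximal (periodize a c) := by
  intro k
  rw [funext (periodize_add k)]
  set r := k % (c + 1)
  rcases Nat.eq_zero_or_pos r with hr | hr
  · left
    simp [hr]
  have hrc : r ≤ c := Nat.lt_succ_iff.mp (Nat.mod_lt _ c.succ_pos)
  right
  rcases ha r with heq | ⟨i, hpre, hlt⟩
  · exact absurd ((congrFun heq c).symm.trans (htail _ (by omega))) hc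
  have hpre' : ∀ j < i, r + j < c → periodize a c (r + j) = periodize a c j := fun j hj hjc => by
    rw [periodize_of_lt (by omega), periodize_of_lt (by omega)]
    exact hpre j hj
  by_cases hi : r + i ≤ c
  -- the first difference of `a` and its shift lies within the period
  · refine ⟨i, fun j hj => hpre' j hj (by omega), ?_⟩
    show periodize a c (r + i) < periodize a c i
    have hle : periodize a c (r + i) ≤ a (r + i) := by
      rcases hi.lt_or_eq with h | h
      · exact (periodize_of_lt h).le
      · rw [h, periodize_self]; omega
    have : a (r + i) < a i := hlt
    rw [periodize_of_lt (a := a) (show i < c by omega)]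
    omega
  -- otherwise the decremented last digit `a c - 1` makes the difference
  · refine ⟨c - r, fun j hj => hpre' j (by omega) (by omega), ?_⟩
    show periodize a c (r + (c - r)) < periodize a c (c - r)
    have : a (r + (c - r)) = a (c - r) := hpre _ (by omega)
    rw [Nat.add_sub_cancel' hrc] at this ⊢
    rw [periodize_self, periodize_of_lt (show c - r < c by omega)]
    omega

end Periodize

lemma epsStar_nonneg (hβ : 0 ≤ β) (j : ℕ) : 0 ≤ epsStar β j := by
  have heps1 : ∀ j, 0 ≤ eps1 β j := dig_nonneg hβ zero_le_one
  rcases epsStar_eq_periodize_or_eq β with ⟨c, hc, -, h⟩ | h <;> rw [h]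
  · exact periodize_nonneg heps1 hc j
  · exact heps1 j

lemma lexShiftMaximal_epsStar (hβ : 0 ≤ β) : LexShiftMaximal (epsStar β) := by
  rcases epsStar_eq_periodize_or_eq β with ⟨c, hc, htail, h⟩ | h <;> rw [h]
  · exact lexShiftMaximal_periodize (lexShiftMaximal_eps1 hβ) hc htail
  · exact lexShiftMaximal_eps1 hβ

end Lex

/-- The tail `∑_{k ≤ i < N} d_i γ^{k-i-1}` of the finite expansion `∑_{i<N} d_i γ^{-i-1}`. -/
noncomputable def tailVal (γ : ℝ) (N : ℕ) (d : ℕ → ℤ) (k : ℕ) : ℝ :=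
  ∑ j ∈ Finset.range (N - k), (d (k + j) : ℝ) / γ ^ (j + 1)

section TailVal

variable {γ : ℝ} {N : ℕ} {d : ℕ → ℤ}

lemma tailVal_nonneg (hγ : 0 ≤ γ) (hd : ∀ j, 0 ≤ d j) (k : ℕ) : 0 ≤ tailVal γ N d k :=
  Finset.sum_nonneg fun j _ => div_nonneg (Int.cast_nonneg (hd _)) (by positivity)

lemma tailVal_of_le {k : ℕ} (hk : N ≤ k) : tailVal γ N d k = 0 := by
  simp [tailVal, Nat.sub_eq_zero_of_le hk]

lemma tailVal_eq_sum_add (hγ : γ ≠ 0) {k i : ℕ} (hi : k + i ≤ N) :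
    tailVal γ N d k =
      ∑ j ∈ Finset.range i, (d (k + j) : ℝ) / γ ^ (j + 1) + tailVal γ N d (k + i) / γ ^ i := by
  rw [tailVal, show N - k = i + (N - (k + i)) by omega, Finset.sum_range_add, tailVal,
    Finset.sum_div]
  congr 1
  refine Finset.sum_congr rfl fun j _ => ?_
  rw [← add_assoc, pow_add]
  field_simp
  ring_nf

lemma mul_tailVal (hγ : γ ≠ 0) {k : ℕ} (hk : k < N) :
    γ * tailVal γ N d k = d k + tailVal γ N d (k + 1) := by
  rw [tailVal_eq_sum_add hγ (show k + 1 ≤ N by omega)]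
  simp only [Finset.sum_range_one, add_zero, zero_add, pow_one]
  field_simp

lemma exists_mul_tailVal_eq (hγ : γ ≠ 0) (h1 : tailVal γ N d 0 = 1) {k : ℕ} (hk : k < N) :
    ∃ e : ℤ, ∃ k' < N, γ * tailVal γ N d k = e + tailVal γ N d k' := by
  by_cases hkN : k + 1 < N
  · exact ⟨d k, k + 1, hkN, mul_tailVal hγ hk⟩
  · refine ⟨d k - 1, 0, by omega, ?_⟩
    rw [mul_tailVal hγ hk, tailVal_of_le (by omega), h1]
    push_cast
    ring

lemma inv_pow_le_tailVal (hγ : 1 ≤ γ) (hd : ∀ j, 0 ≤ d j) (hdN : 1 ≤ d (N - 1)) {k : ℕ}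
    (hk : k < N) : (γ ^ N)⁻¹ ≤ tailVal γ N d k := by
  have hγ0 : 0 < γ := by positivity
  have hlast := Finset.single_le_sum (f := fun j => (d (k + j) : ℝ) / γ ^ (j + 1))
    (fun j _ => div_nonneg (Int.cast_nonneg (hd _)) (by positivity))
    (Finset.mem_range.mpr (show N - k - 1 < N - k by omega))
  rw [show k + (N - k - 1) = N - 1 by omega, show N - k - 1 + 1 = N - k by omega] at hlast
  have hdN' : (1 : ℝ) ≤ d (N - 1) := by exact_mod_cast hdN
  calc (γ ^ N)⁻¹ ≤ (γ ^ (N - k))⁻¹ := inv_anti₀ (by positivity) (pow_le_pow_right₀ hγ (by omega))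
    _ ≤ (d (N - 1) : ℝ) / γ ^ (N - k) := by rw [inv_eq_one_div]; gcongr
    _ ≤ tailVal γ N d k := hlast

/-- Induction on `N - k`: where the shift of `d` first drops below `d`, what remains is a later
tail, hence at most `1`, which cannot make up for the lost unit. -/
lemma tailVal_le_one (hγ : 0 < γ) (hd : ∀ j, 0 ≤ d j) (h1 : tailVal γ N d 0 = 1)
    (hlex : LexShiftMaximal d) (k : ℕ) : tailVal γ N d k ≤ 1 := by
  have hprefix : ∀ t ≤ N, ∑ j ∈ Finset.range t, (d j : ℝ) / γ ^ (j + 1) ≤ 1 := fun t ht => by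
    simp only [tailVal, Nat.sub_zero, zero_add] at h1
    rw [← h1]
    exact Finset.sum_le_sum_of_subset_of_nonneg (Finset.range_subset_range.mpr ht)
      fun j _ _ => div_nonneg (Int.cast_nonneg (hd _)) (by positivity)
  induction hm : N - k using Nat.strong_induction_on generalizing k with
  | _ m ih =>
  have hagree : (∀ j < N - k, d (k + j) = d j) → tailVal γ N d k ≤ 1 := fun h => by
    rw [tailVal, Finset.sum_congr rfl fun j hj => by rw [h j (Finset.mem_range.mp hj)]]
    exact hprefix _ (Nat.sub_le _ _)
  rcases hlex k with heq | ⟨i, hpre, hlt⟩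
  · exact hagree fun j _ => congrFun heq j
  simp only at hpre hlt
  by_cases hi : N - k ≤ i
  · exact hagree fun j hj => hpre j (by omega)
  have hrest : tailVal γ N d (k + (i + 1)) ≤ 1 := ih _ (by omega) _ rfl
  have hlt' : (d (k + i) : ℝ) ≤ d i - 1 := by
    exact_mod_cast (show d (k + i) ≤ d i - 1 by omega)
  rw [tailVal_eq_sum_add hγ.ne' (show k + (i + 1) ≤ N by omega), Finset.sum_range_succ,
    Finset.sum_congr rfl fun j hj => by rw [hpre j (Finset.mem_range.mp hj)]]
  calc _ ≤ ∑ j ∈ Finset.range i, (d j : ℝ) / γ ^ (j + 1) + (d i - 1) / γ ^ (i + 1)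
        + 1 / γ ^ (i + 1) := by gcongr
    _ = ∑ j ∈ Finset.range (i + 1), (d j : ℝ) / γ ^ (j + 1) := by
        rw [Finset.sum_range_succ]; ring
    _ ≤ 1 := hprefix _ (by omega)

/-- The first `m` digits of any `x < tailVal k` are worth at most `tailVal k - γ^{-(m+N)}`:
following the digits of `d₀ ⋯ d_{N-2} (d_{N-1} - 1)` periodically keeps `x` below a tail, and
leaving that path early costs a whole unit. -/
lemma sub_iterate_div_add_inv_pow_le (hγ : 1 ≤ γ) (hN : 1 ≤ N) (hd : ∀ j, 0 ≤ d j)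
    (hdN : 1 ≤ d (N - 1)) (h1 : tailVal γ N d 0 = 1) (hle : ∀ k, tailVal γ N d k ≤ 1) (m : ℕ) :
    ∀ k < N, ∀ x, 0 ≤ x → x < tailVal γ N d k →
      x - (bT γ)^[m] x / γ ^ m + (γ ^ (m + N))⁻¹ ≤ tailVal γ N d k := by
  have hγ0 : 0 < γ := by positivity
  induction m with
  | zero =>
    intro k hk x _ _
    simpa using inv_pow_le_tailVal hγ hd hdN hk
  | succ m ih =>
    intro k hk x hx0 hxk
    obtain ⟨e, k', hk', hrec⟩ := exists_mul_tailVal_eq hγ0.ne' h1 hk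
    set x' := bT γ x with hx'
    have hx'I : x' ∈ Ico (0 : ℝ) 1 := bT_mem_Ico γ x
    have hsplit : γ * x = dig γ x 0 + x' := by simpa using mul_iterate_bT γ x 0
    have hγx : γ * x < γ * tailVal γ N d k := mul_lt_mul_of_pos_left hxk hγ0
    have hw : dig γ x 0 ≤ e := by
      have : (dig γ x 0 : ℝ) < e + 1 := by linarith [hle k', hx'I.1]
      exact Int.lt_add_one_iff.mp (by exact_mod_cast this)
    have hstep : x' - (bT γ)^[m] x' / γ ^ m + (γ ^ (m + N))⁻¹
        ≤ (e - dig γ x 0 : ℝ) + tailVal γ N d k' := by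
      rcases hw.lt_or_eq with hlt | heq
      · have := ih 0 (by omega) x' hx'I.1 (h1 ▸ hx'I.2)
        have : (1 : ℝ) ≤ e - dig γ x 0 := by
          exact_mod_cast (show 1 ≤ e - dig γ x 0 by omega)
        linarith [tailVal_nonneg hγ0.le hd k' (N := N), h1]
      · rw [heq] at hsplit ⊢
        have := ih k' hk' x' hx'I.1 (by linarith)
        linarith
    have hscale : γ * (x - (bT γ)^[m + 1] x / γ ^ (m + 1) + (γ ^ (m + 1 + N))⁻¹)
        = γ * x - (bT γ)^[m] x' / γ ^ m + (γ ^ (m + N))⁻¹ := by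
      rw [Function.iterate_succ_apply, ← hx', show m + 1 + N = m + N + 1 by omega, pow_succ,
        pow_succ]
      field_simp
    refine le_of_mul_le_mul_left ?_ hγ0
    rw [hscale, hrec]
    linarith

end TailVal

theorem stmt10_general (β γ : ℝ) (hβ : 1 < β) (hγ1 : 1 < γ)
    (N : ℕ) (hN : 1 ≤ N) (hNdig : 1 ≤ epsStar β (N - 1))
    (hsol : 1 = ∑ j ∈ Finset.range N, (epsStar β j : ℝ) / γ ^ (j + 1))
    (u v : List ℤ) (hu : Adm γ u) (hv : Adm γ v) :
    Adm γ (u ++ List.replicate N 0 ++ v) := by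
  have hβ0 : 0 ≤ β := by positivity
  have hd := epsStar_nonneg hβ0
  have h1 : tailVal γ N (epsStar β) 0 = 1 := by simpa [tailVal] using hsol.symm
  have hle := tailVal_le_one (by positivity) hd h1 (lexShiftMaximal_epsStar hβ0)
  refine adm_append_replicate_zero_append hγ1.le (fun y hy m => ?_) hu hv
  simpa [h1] using
    sub_iterate_div_add_inv_pow_le hγ1.le hN hd hNdig h1 hle m 0 hN y hy.1 (h1 ▸ hy.2)

theorem stmt10 (β γ : ℝ) (hβ : 1 < β) (hγ1 : 1 < γ) (hγβ : γ < β)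
    (N : ℕ) (hN : 1 ≤ N) (hNdig : 1 ≤ epsStar β (N - 1))
    (hsol : 1 = ∑ j ∈ Finset.range N, (epsStar β j : ℝ) / γ ^ (j + 1))
    (u v : List ℤ) (hu : Adm γ u) (hv : Adm γ v) :
    Adm γ (u ++ List.replicate N 0 ++ v) :=
  stmt10_general β γ hβ hγ1 N hN hNdig hsol u v hu hv
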